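/- Let λ ∈ ℂ with λ_i = Im λ > 0, and let f : ℝ → H be continuous on [b, +∞) with ∫_b^{∞} ‖f(s)‖² ds < ∞. Then the function u(t) = i ∫_t^{∞} e^{−iλ(t−s)} exp(i(t−s)A) f(s) ds is well defined and differentiable on [b, +∞) and satisfies i u'(t) + A u(t) = λ u(t) + f(t) for every t ≥ b; i.e., u solves the resolvent equation on the half-line [b, +∞) (part of the proof of Theorem 3.2). -/

import Mathlib

/-!
Since `e^{-iλτ} exp(iτA) = exp(iτ(A - λ))`, the integrand is `exp(it(A - λ)) g(s)` with
`g(s) = exp(-is(A - λ)) f(s)`, so `u(t) = i exp(it(A - λ)) ∫_t^∞ g`. Unitarity of `exp(isA)` gives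
`‖g(s)‖ = e^{-s Im λ} ‖f(s)‖`, which is integrable on `[b, ∞)` by `2xy ≤ x² + y²` since `‖f‖` is
square integrable. The tail integral then has derivative `-g(t)`, and the product rule gives
`u' = i(A - λ)u - if`, which is the resolvent equation.
-/

open MeasureTheory Set Complex
open scoped InnerProductSpace

/-- The operator exponential `exp(iτA)` for a bounded operator `A` and `τ ∈ ℝ`. -/
noncomputable def expIA {H : Type*} [NormedAddCommGroup H] [InnerProductSpace ℂ H]
    [CompleteSpace H] (A : H →L[ℂ] H) (τ : ℝ) : H →L[ℂ] H :=
  NormedSpace.exp ((Complex.I * (τ : ℂ)) • A)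

section TailIntegral

variable {E : Type*} [NormedAddCommGroup E] [NormedSpace ℝ E] [CompleteSpace E]
  {g : ℝ → E} {b t : ℝ}

theorem ContinuousOn.hasDerivWithinAt_intervalIntegral_Ici (hg : ContinuousOn g (Ici b))
    (ht : b ≤ t) : HasDerivWithinAt (fun x => ∫ s in b..x, g s) (g t) (Ici b) t := by
  have hint : IntervalIntegrable g volume b t :=
    (hg.mono Icc_subset_Ici_self).intervalIntegrable_of_Icc ht
  have hmeas := hg.stronglyMeasurableAtFilter_nhdsWithin (μ := volume) measurableSet_Ici t
  rcases ht.eq_or_lt with rfl | hbt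
  · exact intervalIntegral.integral_hasDerivWithinAt_right hint
      (hmeas.filter_mono (nhdsWithin_mono _ Ioi_subset_Ici_self))
      ((hg b self_mem_Ici).mono Ioi_subset_Ici_self)
  · rw [nhdsWithin_eq_nhds.2 (Ici_mem_nhds hbt)] at hmeas
    exact (intervalIntegral.integral_hasDerivAt_right hint hmeas
      ((hg t ht).continuousAt (Ici_mem_nhds hbt))).hasDerivWithinAt

theorem ContinuousOn.hasDerivWithinAt_integral_Ioi (hg : ContinuousOn g (Ici b))
    (hgi : IntegrableOn g (Ioi b)) (ht : b ≤ t) :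
    HasDerivWithinAt (fun x => ∫ s in Ioi x, g s) (-g t) (Ici b) t := by
  have htail : ∀ x ∈ Ici b, ∫ s in Ioi x, g s = (∫ s in Ioi b, g s) - ∫ s in b..x, g s :=
    fun x hx => eq_sub_of_add_eq' (intervalIntegral.integral_interval_add_Ioi hgi
      (hgi.mono_set (Ioi_subset_Ioi hx)))
  exact ((hg.hasDerivWithinAt_intervalIntegral_Ici ht).const_sub _).congr htail (htail t ht)

end TailIntegral

theorem integrableOn_Ioi_of_norm_le_exp_mul {E : Type*} [NormedAddCommGroup E] {g : ℝ → E}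
    {φ : ℝ → ℝ} {b c : ℝ} (hc : 0 < c) (hφ : IntegrableOn (fun s => φ s ^ 2) (Ioi b))
    (hg : AEStronglyMeasurable g (volume.restrict (Ioi b)))
    (hle : ∀ s, ‖g s‖ ≤ Real.exp (-c * s) * φ s) : IntegrableOn g (Ioi b) := by
  have hbound : IntegrableOn (fun s => (Real.exp (-(2 * c) * s) + φ s ^ 2) / 2) (Ioi b) :=
    ((exp_neg_integrableOn_Ioi b (by positivity)).add hφ).div_const 2
  refine hbound.mono' hg (ae_of_all _ fun s => (hle s).trans ?_)
  have hsq : Real.exp (-(2 * c) * s) = Real.exp (-c * s) ^ 2 := by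
    rw [sq, ← Real.exp_add]; ring_nf
  rw [hsq]
  linarith [two_mul_le_add_sq (Real.exp (-c * s)) (φ s)]

section expIA

variable {H : Type*} [NormedAddCommGroup H] [InnerProductSpace ℂ H] [CompleteSpace H]
  (A : H →L[ℂ] H)

-- `NormedSpace.exp_add_of_commute` and `NormedSpace.exp_continuous` work in `ℚ`-normed algebras.
noncomputable local instance : NormedAlgebra ℚ (H →L[ℂ] H) :=
  NormedAlgebra.restrictScalars ℚ ℂ _

theorem expIA_add (σ τ : ℝ) : expIA A (σ + τ) = expIA A σ * expIA A τ := by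
  rw [expIA, expIA, expIA, ofReal_add, mul_add, add_smul]
  exact NormedSpace.exp_add_of_commute (((Commute.refl A).smul_left _).smul_right _)

theorem expIA_apply_expIA_neg (τ : ℝ) (x : H) : expIA A τ (expIA A (-τ) x) = x := by
  calc expIA A τ (expIA A (-τ) x) = expIA A (τ + -τ) x := by rw [expIA_add]; rfl
    _ = x := by simp [expIA]

theorem continuous_expIA : Continuous (expIA A) :=
  NormedSpace.exp_continuous.comp ((continuous_const.mul continuous_ofReal).smul continuous_const)

theorem hasDerivAt_expIA (t : ℝ) : HasDerivAt (expIA A) (I • A * expIA A t) t := by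
  have hexp : expIA A = fun τ : ℝ => NormedSpace.exp ((τ : ℂ) • (I • A)) := by
    ext1 τ; rw [expIA, smul_smul, mul_comm]
  rw [hexp]
  have h := (hasDerivAt_exp_smul_const' (I • A) (t : ℂ)).scomp t ofRealCLM.hasDerivAt
  simp only [ofRealCLM_apply, ofReal_one, one_smul, smul_mul_assoc] at h
  exact h

theorem expIA_sub_smul_one (lam : ℂ) (τ : ℝ) :
    expIA (A - lam • 1) τ = Complex.exp (-I * lam * τ) • expIA A τ := by
  have hsplit :
      (I * τ) • (A - lam • 1) = (I * τ) • A + algebraMap ℂ (H →L[ℂ] H) (-I * lam * τ) := by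
    rw [Algebra.algebraMap_eq_smul_one, smul_sub, smul_smul, sub_eq_add_neg, ← neg_smul]
    congr 2; ring
  rw [expIA, hsplit, NormedSpace.exp_add_of_commute (Algebra.commutes _ _).symm,
    ← NormedSpace.algebraMap_exp_comm, ← Complex.exp_eq_exp_ℂ, Algebra.algebraMap_eq_smul_one,
    mul_smul_one, expIA]

theorem norm_expIA_apply (hA : IsSelfAdjoint A) (τ : ℝ) (x : H) : ‖expIA A τ x‖ = ‖x‖ := by
  have hU : expIA A τ ∈ unitary (H →L[ℂ] H) := by
    apply NormedSpace.exp_mem_unitary_of_mem_skewAdjoint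
    rw [show I * (τ : ℂ) = τ * I from mul_comm _ _]
    exact IsSelfAdjoint.smul_mem_skewAdjoint (by simp [skewAdjoint.mem_iff]) hA
  exact ContinuousLinearMap.norm_map_of_mem_unitary hU x

theorem norm_expIA_sub_smul_one_apply (hA : IsSelfAdjoint A) (lam : ℂ) (τ : ℝ) (x : H) :
    ‖expIA (A - lam • 1) τ x‖ = Real.exp (lam.im * τ) * ‖x‖ := by
  rw [expIA_sub_smul_one, smul_apply, norm_smul, norm_expIA_apply A hA, Complex.norm_exp]
  simp

theorem exp_smul_expIA_sub_apply (lam : ℂ) (t s : ℝ) (x : H) :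
    Complex.exp (-I * lam * ((t : ℂ) - s)) • expIA A (t - s) x
      = expIA (A - lam • 1) t (expIA (A - lam • 1) (-s) x) := by
  rw [← ofReal_sub, ← smul_apply, ← expIA_sub_smul_one, sub_eq_add_neg t, expIA_add]
  rfl

theorem HasDerivWithinAt.expIA_apply {v : ℝ → H} {v' : H} {s : Set ℝ} {t : ℝ}
    (hv : HasDerivWithinAt v v' s t) :
    HasDerivWithinAt (fun τ => expIA A τ (v τ)) (I • A (expIA A t (v t)) + expIA A t v') s t := by
  have hE : HasDerivAt (fun τ => (expIA A τ).restrictScalars ℝ)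
      ((I • A * expIA A t).restrictScalars ℝ) t :=
    (ContinuousLinearMap.restrictScalarsL ℂ H H ℝ ℝ).hasFDerivAt.comp_hasDerivAt t
      (hasDerivAt_expIA A t)
  simpa using hE.hasDerivWithinAt.clm_apply hv

end expIA

/-- For `Im λ > 0` and `f` continuous on `[b, ∞)` with `∫_b^∞ ‖f‖² < ∞`, the function
`u(t) = i ∫_t^∞ e^{−iλ(t−s)} exp(i(t−s)A) f(s) ds` is well defined and differentiable
on `[b, ∞)` and solves `i u' + A u = λ u + f` there (part of the proof of Theorem 3.2). -/
theorem resolvent_solution_right_halfline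
    {H : Type*} [NormedAddCommGroup H] [InnerProductSpace ℂ H] [CompleteSpace H]
    (A : H →L[ℂ] H) (hA : IsSelfAdjoint A) (b : ℝ) (lam : ℂ) (hlam : 0 < lam.im)
    (f : ℝ → H) (hfc : ContinuousOn f (Set.Ici b))
    (hfL2 : IntegrableOn (fun s : ℝ => ‖f s‖ ^ 2) (Set.Ici b) volume)
    (u : ℝ → H)
    (hu : u = fun t : ℝ => Complex.I • ∫ s in Set.Ioi t,
      Complex.exp (-Complex.I * lam * ((t : ℂ) - (s : ℂ))) • (expIA A (t - s)) (f s)) :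
    (∀ t ∈ Set.Ici b,
      IntegrableOn (fun s : ℝ =>
        Complex.exp (-Complex.I * lam * ((t : ℂ) - (s : ℂ))) • (expIA A (t - s)) (f s))
        (Set.Ioi t) volume)
    ∧ ∃ u' : ℝ → H, ∀ t ∈ Set.Ici b,
        HasDerivWithinAt u (u' t) (Set.Ici b) t
        ∧ Complex.I • u' t + A (u t) = lam • u t + f t := by
  set B := A - lam • (1 : H →L[ℂ] H)
  set g : ℝ → H := fun s => expIA B (-s) (f s) with hg
  have hkernel : ∀ t s : ℝ, Complex.exp (-I * lam * ((t : ℂ) - (s : ℂ))) • expIA A (t - s) (f s)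
      = expIA B t (g s) := fun t s => exp_smul_expIA_sub_apply A lam t s (f s)
  have hg_cont : ContinuousOn g (Ici b) :=
    ((continuous_expIA B).comp continuous_neg).continuousOn.clm_apply hfc
  have hg_int : IntegrableOn g (Ioi b) := by
    refine integrableOn_Ioi_of_norm_le_exp_mul hlam (φ := fun s => ‖f s‖)
      (hfL2.mono_set Ioi_subset_Ici_self)
      ((hg_cont.mono Ioi_subset_Ici_self).aestronglyMeasurable measurableSet_Ioi) fun s => ?_
    rw [hg, norm_expIA_sub_smul_one_apply A hA, mul_neg, neg_mul]
  have hg_int_tail : ∀ t ∈ Ici b, IntegrableOn g (Ioi t) :=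
    fun t ht => hg_int.mono_set (Ioi_subset_Ioi ht)
  have hu_eq : ∀ t ∈ Ici b, u t = I • expIA B t (∫ s in Ioi t, g s) := by
    intro t ht
    simp only [hu, hkernel]
    rw [(expIA B t).integral_comp_comm (hg_int_tail t ht)]
  refine ⟨fun t ht => by simp_rw [hkernel]; exact (expIA B t).integrable_comp (hg_int_tail t ht),
    fun t => I • (B (u t) - f t), fun t ht => ⟨?_, ?_⟩⟩
  · have hw := ((hg_cont.hasDerivWithinAt_integral_Ioi hg_int ht).expIA_apply B).const_smul I
    refine (hw.congr hu_eq (hu_eq t ht)).congr_deriv ?_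
    beta_reduce
    rw [hu_eq t ht, map_neg, hg, expIA_apply_expIA_neg, map_smul]
    module
  · simp only [B, sub_apply, smul_apply, one_apply_eq_self, smul_smul, I_mul_I]
    module
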